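/- Let F : ℂ → ℂ → ℂ be such that (z,w) ↦ F z w is analytic (jointly) on 𝔻 × 𝔻, F 0 0 = 0, F is Hermitian-symmetric on 𝔻 × 𝔻 (F z w = conj (F (conj w) (conj z)) for all z, w ∈ 𝔻), F satisfies the PDE deriv (deriv (fun ζ => F ζ w)) z = w² · deriv (fun ξ => deriv (fun ζ => F ζ ξ) z) w for all z, w ∈ 𝔻, and the kernel k(ν,ω) = F ν (conj ω) is positive semidefinite on 𝔻 (for all finite tuples ω_i ∈ 𝔻 and c_i ∈ ℂ, Σ_{i,j} conj(c_i)·c_j·F ω_i (conj ω_j) is a nonnegative real number). Then there exists a real number c ≥ 0 such that F z w = −c · Complex.log (1 − z·w) for all z, w ∈ 𝔻. -/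

import Mathlib

/-!
Write `u = ∂₁F`. The equation `∂₁u = w² ∂₂u` says that `u` is constant along the characteristics
`s ↦ (s, ξ / (1 + s ξ))`, so `u (z, w) = g (w / (1 - z w))` with `g = u (0, ·)`. Hermitian symmetry
gives `∂₂F (z, w) = conj (u (conj w, conj z))`, and equating the two mixed partials of `F` at
`(0, w)` yields `g' ≡ conj (g' 0)`. Hence `g ξ = a + b ξ` with `b` real, and integrating in `z`,
`F (z, w) = a z + conj a w - b log (1 - z w)` near the origin, so on the whole bidisk by the
identity theorem. On the diagonal, `F (ω, conj ω) = 2 Re (a ω) - b log (1 - |ω|²) ≥ 0` has a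
minimum at `ω = 0`, which kills the linear term, so `a = 0`, and then `b ≥ 0`.
-/

open ComplexConjugate Complex Filter Topology Metric

noncomputable def partialDerivFst {𝕜 E : Type*} [NontriviallyNormedField 𝕜] [NormedAddCommGroup E]
    [NormedSpace 𝕜 E] (G : 𝕜 × 𝕜 → E) (p : 𝕜 × 𝕜) : E :=
  deriv (fun ζ => G (ζ, p.2)) p.1

noncomputable def partialDerivSnd {𝕜 E : Type*} [NontriviallyNormedField 𝕜] [NormedAddCommGroup E]
    [NormedSpace 𝕜 E] (G : 𝕜 × 𝕜 → E) (p : 𝕜 × 𝕜) : E :=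
  deriv (fun ξ => G (p.1, ξ)) p.2

local notation "∂₁" => partialDerivFst
local notation "∂₂" => partialDerivSnd

section PartialDeriv

variable {𝕜 E : Type*} [NontriviallyNormedField 𝕜] [NormedAddCommGroup E] [NormedSpace 𝕜 E]
variable {G : 𝕜 × 𝕜 → E} {p : 𝕜 × 𝕜}

theorem DifferentiableAt.partialDerivFst_eq (h : DifferentiableAt 𝕜 G p) :
    ∂₁ G p = fderiv 𝕜 G p (1, 0) :=
  (h.hasFDerivAt.comp_hasDerivAt p.1
    ((hasDerivAt_id p.1).prodMk (hasDerivAt_const p.1 p.2))).deriv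

theorem DifferentiableAt.partialDerivSnd_eq (h : DifferentiableAt 𝕜 G p) :
    ∂₂ G p = fderiv 𝕜 G p (0, 1) :=
  (h.hasFDerivAt.comp_hasDerivAt p.2
    ((hasDerivAt_const p.2 p.1).prodMk (hasDerivAt_id p.2))).deriv

theorem DifferentiableAt.hasDerivAt_partialDerivFst (h : DifferentiableAt 𝕜 G p) :
    HasDerivAt (fun ζ => G (ζ, p.2)) (∂₁ G p) p.1 :=
  (h.comp p.1 (differentiableAt_id.prodMk (differentiableAt_const p.2))).hasDerivAt

theorem DifferentiableAt.hasDerivAt_partialDerivSnd (h : DifferentiableAt 𝕜 G p) :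
    HasDerivAt (fun ξ => G (p.1, ξ)) (∂₂ G p) p.2 :=
  (h.comp p.2 ((differentiableAt_const p.1).prodMk differentiableAt_id)).hasDerivAt

theorem DifferentiableAt.hasDerivAt_comp_graph {γ : 𝕜 → 𝕜} {γ' x : 𝕜}
    (hG : DifferentiableAt 𝕜 G (x, γ x)) (hγ : HasDerivAt γ γ' x) :
    HasDerivAt (fun s => G (s, γ s)) (∂₁ G (x, γ x) + γ' • ∂₂ G (x, γ x)) x := by
  have h := hG.hasFDerivAt.comp_hasDerivAt x ((hasDerivAt_id x).prodMk hγ)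
  have hsplit : ((1 : 𝕜), γ') = (1, 0) + γ' • (0, 1) := by simp
  rwa [hsplit, map_add, map_smul, ← hG.partialDerivFst_eq, ← hG.partialDerivSnd_eq] at h

theorem Filter.EventuallyEq.partialDerivFst_eq {H : 𝕜 × 𝕜 → E} (h : G =ᶠ[𝓝 p] H) :
    ∂₁ G p = ∂₁ H p :=
  (h.comp_tendsto ((continuous_id.prodMk continuous_const).tendsto p.1)).deriv_eq

theorem Filter.EventuallyEq.partialDerivSnd_eq {H : 𝕜 × 𝕜 → E} (h : G =ᶠ[𝓝 p] H) :
    ∂₂ G p = ∂₂ H p :=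
  (h.comp_tendsto ((continuous_const.prodMk continuous_id).tendsto p.2)).deriv_eq

variable [CompleteSpace E]

theorem AnalyticAt.partialDerivFst (h : AnalyticAt 𝕜 G p) : AnalyticAt 𝕜 (∂₁ G) p := by
  have hfd : AnalyticAt 𝕜 (fun q => fderiv 𝕜 G q (1, 0)) p :=
    (ContinuousLinearMap.apply 𝕜 E ((1 : 𝕜), (0 : 𝕜))).analyticAt _ |>.comp h.fderiv
  refine hfd.congr ?_
  filter_upwards [h.eventually_analyticAt] with q hq
  exact hq.differentiableAt.partialDerivFst_eq.symm

theorem AnalyticAt.partialDerivSnd_partialDerivFst (h : AnalyticAt 𝕜 G p) :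
    ∂₂ (∂₁ G) p = ∂₁ (∂₂ G) p := by
  have h₁ : ∂₁ G =ᶠ[𝓝 p] fun q => fderiv 𝕜 G q (1, 0) := by
    filter_upwards [h.eventually_analyticAt] with q hq
    exact hq.differentiableAt.partialDerivFst_eq
  have h₂ : ∂₂ G =ᶠ[𝓝 p] fun q => fderiv 𝕜 G q (0, 1) := by
    filter_upwards [h.eventually_analyticAt] with q hq
    exact hq.differentiableAt.partialDerivSnd_eq
  have hd (v : 𝕜 × 𝕜) : HasFDerivAt (fun q => fderiv 𝕜 G q v)
      ((ContinuousLinearMap.apply 𝕜 E v).comp (fderiv 𝕜 (fderiv 𝕜 G) p)) p :=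
    (ContinuousLinearMap.apply 𝕜 E v).hasFDerivAt.comp p h.fderiv.differentiableAt.hasFDerivAt
  rw [h₁.partialDerivSnd_eq, h₂.partialDerivFst_eq, (hd _).differentiableAt.partialDerivSnd_eq,
    (hd _).differentiableAt.partialDerivFst_eq, (hd _).fderiv, (hd _).fderiv]
  exact h.contDiffAt.isSymmSndFDerivAt_of_omega.eq _ _

end PartialDeriv

theorem eq_of_hasDerivAt_eq_zero_on_ball {𝕜 E : Type*} [RCLike 𝕜] [NormedAddCommGroup E]
    [NormedSpace 𝕜 E] {f : 𝕜 → E} {r : ℝ} (h : ∀ s ∈ ball (0 : 𝕜) r, HasDerivAt f 0 s)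
    {z : 𝕜} (hz : z ∈ ball 0 r) : f z = f 0 :=
  isOpen_ball.is_const_of_deriv_eq_zero (convex_ball 0 r).isPreconnected
    (fun s hs => (h s hs).differentiableAt.differentiableWithinAt) (fun s hs => (h s hs).deriv)
    hz (mem_ball_self (pos_of_mem_ball hz))

theorem one_sub_norm_mul_le_norm_one_add_mul {R : Type*} [SeminormedRing R] [NormOneClass R]
    (a b : R) : 1 - ‖a‖ * ‖b‖ ≤ ‖1 + a * b‖ := by
  have h := norm_sub_norm_le (1 : R) (-(a * b))
  rw [norm_one, norm_neg, sub_neg_eq_add] at h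
  linarith [norm_mul_le a b]

def bidisk : Set (ℂ × ℂ) := ball 0 1 ×ˢ ball 0 1

theorem mem_bidisk {z w : ℂ} : (z, w) ∈ bidisk ↔ ‖z‖ < 1 ∧ ‖w‖ < 1 := by
  simp [bidisk]

theorem one_sub_mul_mem_slitPlane {z w : ℂ} (hz : ‖z‖ < 1) (hw : ‖w‖ < 1) :
    1 - z * w ∈ slitPlane := by
  have h : ‖z * w‖ < 1 := by
    rw [norm_mul]
    nlinarith [norm_nonneg z, norm_nonneg w]
  refine mem_slitPlane_iff.2 (Or.inl ?_)
  rw [sub_re, one_re]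
  linarith [re_le_norm (z * w)]

theorem norm_div_one_sub_mul_lt {z w : ℂ} (hz : ‖z‖ < 1 / 2) (hw : ‖w‖ < 1 / 3) :
    ‖w / (1 - z * w)‖ < 1 / 2 := by
  have hbound := one_sub_norm_mul_le_norm_one_add_mul z (-w)
  rw [norm_neg, mul_neg, ← sub_eq_add_neg] at hbound
  rw [norm_div, div_lt_iff₀ (by nlinarith [norm_nonneg z, norm_nonneg w])]
  nlinarith [norm_nonneg z, norm_nonneg w]

section Characteristics

variable {u : ℂ × ℂ → ℂ} (hu : AnalyticOnNhd ℂ u bidisk)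
  (hpde : ∀ z w : ℂ, ‖z‖ < 1 → ‖w‖ < 1 → ∂₁ u (z, w) = w ^ 2 * ∂₂ u (z, w))
include hu hpde

theorem apply_characteristic_eq {z ξ : ℂ} (hz : ‖z‖ < 1 / 2) (hξ : ‖ξ‖ < 1 / 2) :
    u (z, ξ / (1 + z * ξ)) = u (0, ξ) := by
  have hbound : ∀ s : ℂ, ‖s‖ < 1 / 2 → 3 / 4 < ‖1 + s * ξ‖ := fun s hs => by
    nlinarith [one_sub_norm_mul_le_norm_one_add_mul s ξ, norm_nonneg s, norm_nonneg ξ]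
  suffices h : u (z, ξ / (1 + z * ξ)) = u (0, ξ / (1 + 0 * ξ)) by simpa using h
  refine eq_of_hasDerivAt_eq_zero_on_ball (f := fun s => u (s, ξ / (1 + s * ξ))) (r := 1 / 2)
    (fun s hs => ?_) (mem_ball_zero_iff.2 hz)
  rw [mem_ball_zero_iff] at hs
  have hne : 1 + s * ξ ≠ 0 := norm_pos_iff.1 (by linarith [hbound s hs])
  set η := ξ / (1 + s * ξ)
  have hη : ‖η‖ < 1 := by
    rw [norm_div, div_lt_one (by linarith [hbound s hs])]
    linarith [hbound s hs]
  have hγ : HasDerivAt (fun s => ξ / (1 + s * ξ)) (-η ^ 2) s := by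
    refine ((hasDerivAt_const s ξ).div (((hasDerivAt_id s).mul_const ξ).const_add 1)
      hne).congr_deriv ?_
    simp only [η, div_pow, id]
    ring
  have h := (hu _ (mem_bidisk.2 ⟨by linarith, hη⟩)).differentiableAt.hasDerivAt_comp_graph hγ
  rwa [hpde s η (by linarith) hη, smul_eq_mul, neg_mul, add_neg_cancel] at h

theorem apply_eq_apply_zero_div {z w : ℂ} (hz : ‖z‖ < 1 / 2) (hw : ‖w‖ < 1 / 3) :
    u (z, w) = u (0, w / (1 - z * w)) := by
  have hne : 1 - z * w ≠ 0 :=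
    slitPlane_ne_zero (one_sub_mul_mem_slitPlane (by linarith) (by linarith))
  have hinv : 1 + z * (w / (1 - z * w)) = (1 - z * w)⁻¹ := by
    field_simp
    ring
  rw [← apply_characteristic_eq hu hpde hz (norm_div_one_sub_mul_lt hz hw), hinv,
    div_inv_eq_mul, div_mul_cancel₀ _ hne]

end Characteristics

noncomputable def logKernel (a b : ℂ) (p : ℂ × ℂ) : ℂ :=
  a * p.1 + conj a * p.2 - b * log (1 - p.1 * p.2)

theorem analyticOnNhd_logKernel (a b : ℂ) : AnalyticOnNhd ℂ (logKernel a b) bidisk := by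
  rintro ⟨z, w⟩ hp
  obtain ⟨hz, hw⟩ := mem_bidisk.1 hp
  have hlog : AnalyticAt ℂ (fun p : ℂ × ℂ => log (1 - p.1 * p.2)) (z, w) :=
    (analyticAt_const.sub (analyticAt_fst.mul analyticAt_snd)).clog
      (one_sub_mul_mem_slitPlane hz hw)
  exact ((analyticAt_const.mul analyticAt_fst).add (analyticAt_const.mul analyticAt_snd)).sub
    (analyticAt_const.mul hlog)

theorem hasDerivAt_logKernel_fst (a b : ℂ) {z w : ℂ} (hz : ‖z‖ < 1) (hw : ‖w‖ < 1) :
    HasDerivAt (fun s => logKernel a b (s, w)) (a + b * (w / (1 - z * w))) z := by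
  have hlog := (((hasDerivAt_id' z).mul_const w).const_sub 1).clog
    (one_sub_mul_mem_slitPlane hz hw)
  refine ((((hasDerivAt_id' z).const_mul a).add_const (conj a * w)).sub
    (hlog.const_mul b)).congr_deriv ?_
  ring

theorem re_logKernel_diag (a b : ℂ) {ω : ℂ} (hω : ‖ω‖ < 1) :
    (logKernel a b (ω, conj ω)).re = 2 * (a * ω).re - b.re * Real.log (1 - ‖ω‖ ^ 2) := by
  have hnorm : 1 - ω * conj ω = ((1 - ‖ω‖ ^ 2 : ℝ) : ℂ) := by
    rw [mul_conj, normSq_eq_norm_sq]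
    push_cast
    ring
  have hpos : 0 ≤ 1 - ‖ω‖ ^ 2 := by nlinarith [norm_nonneg ω]
  rw [logKernel, hnorm, ← ofReal_log hpos, ← map_mul]
  simp only [sub_re, add_re, conj_re, re_mul_ofReal]
  ring

section Hermitian

variable {f : ℂ × ℂ → ℂ}
  (hsym : ∀ z w : ℂ, ‖z‖ < 1 → ‖w‖ < 1 → f (z, w) = conj (f (conj w, conj z)))
include hsym

theorem partialDerivSnd_eq_conj_partialDerivFst {z w : ℂ} (hz : ‖z‖ < 1) (hw : ‖w‖ < 1) :
    ∂₂ f (z, w) = conj (∂₁ f (conj w, conj z)) := by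
  have hev : (fun ξ => f (z, ξ)) =ᶠ[𝓝 w] conj ∘ (fun ζ => f (ζ, conj z)) ∘ conj := by
    filter_upwards [isOpen_ball.mem_nhds (mem_ball_zero_iff.2 hw)] with ξ hξ
    exact hsym z ξ hz (mem_ball_zero_iff.1 hξ)
  rw [partialDerivSnd, hev.deriv_eq, deriv_conj_conj]
  rfl

variable (hf : AnalyticOnNhd ℂ f bidisk)
  (hpde : ∀ z w : ℂ, ‖z‖ < 1 → ‖w‖ < 1 → ∂₁ (∂₁ f) (z, w) = w ^ 2 * ∂₂ (∂₁ f) (z, w))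
include hf hpde

theorem partialDerivSnd_partialDerivFst_eq_conj {w : ℂ} (hw : ‖w‖ < 1 / 2) :
    ∂₂ (∂₁ f) (0, w) = conj (∂₂ (∂₁ f) (0, 0)) := by
  have hu : AnalyticOnNhd ℂ (∂₁ f) bidisk := fun p hp => (hf p hp).partialDerivFst
  set g : ℂ → ℂ := fun ξ => ∂₁ f (0, ξ)
  set φ : ℂ → ℂ := fun ζ => ζ / (1 - ζ * w)
  have hev : (fun ζ => ∂₂ f (ζ, w)) =ᶠ[𝓝 0] (conj ∘ g ∘ conj) ∘ φ := by
    filter_upwards [isOpen_ball.mem_nhds (mem_ball_self (by norm_num : (0 : ℝ) < 1 / 3))]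
      with ζ hζ
    rw [mem_ball_zero_iff] at hζ
    rw [partialDerivSnd_eq_conj_partialDerivFst hsym (by linarith) (by linarith),
      apply_eq_apply_zero_div hu hpde (by rwa [norm_conj]) (by rwa [norm_conj])]
    simp [g, φ, mul_comm]
  have hφ : HasDerivAt φ 1 0 := by
    have h := (hasDerivAt_id' (0 : ℂ)).div (((hasDerivAt_id' 0).mul_const w).const_sub 1)
      (by simp)
    simp only [zero_mul, sub_zero, div_one, one_mul, one_pow] at h
    exact h
  have hg : HasDerivAt (conj ∘ g ∘ conj) (conj (∂₂ (∂₁ f) (0, 0))) (φ 0) := by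
    simpa [φ] using ((hu _ (mem_bidisk.2 ⟨by simp, by simp⟩)).differentiableAt
      |>.hasDerivAt_partialDerivSnd).conj_conj
  rw [(hf _ (mem_bidisk.2 ⟨by simp, by linarith⟩)).partialDerivSnd_partialDerivFst,
    partialDerivFst, hev.deriv_eq, (hg.comp 0 hφ).deriv, mul_one]

theorem conj_partialDerivSnd_partialDerivFst_zero :
    conj (∂₂ (∂₁ f) (0, 0)) = ∂₂ (∂₁ f) (0, 0) :=
  (partialDerivSnd_partialDerivFst_eq_conj hsym hf hpde (w := 0) (by simp)).symm

theorem partialDerivFst_zero_eq_add_mul {ξ : ℂ} (hξ : ‖ξ‖ < 1 / 2) :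
    ∂₁ f (0, ξ) = ∂₁ f (0, 0) + ∂₂ (∂₁ f) (0, 0) * ξ := by
  set b := ∂₂ (∂₁ f) (0, 0)
  have h : ∀ t ∈ ball (0 : ℂ) (1 / 2), HasDerivAt (fun t => ∂₁ f (0, t) - b * t) 0 t := by
    intro t ht
    rw [mem_ball_zero_iff] at ht
    have hu := (hf (0, t) (mem_bidisk.2 ⟨by simp, by linarith⟩)).partialDerivFst.differentiableAt
    have h := hu.hasDerivAt_partialDerivSnd.sub ((hasDerivAt_id' t).const_mul b)
    rwa [partialDerivSnd_partialDerivFst_eq_conj hsym hf hpde ht,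
      conj_partialDerivSnd_partialDerivFst_zero hsym hf hpde, mul_one, sub_self] at h
  have := eq_of_hasDerivAt_eq_zero_on_ball h (mem_ball_zero_iff.2 hξ)
  simp only [mul_zero, sub_zero] at this
  rw [← this]
  ring

theorem eventuallyEq_logKernel (h00 : f (0, 0) = 0) :
    f =ᶠ[𝓝 (0, 0)] logKernel (∂₁ f (0, 0)) (∂₂ (∂₁ f) (0, 0)) := by
  set a := ∂₁ f (0, 0)
  set b := ∂₂ (∂₁ f) (0, 0)
  have hu : AnalyticOnNhd ℂ (∂₁ f) bidisk := fun p hp => (hf p hp).partialDerivFst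
  have hslice : ∀ z w : ℂ, ‖z‖ < 1 / 2 → ‖w‖ < 1 / 3 →
      f (z, w) - logKernel a b (z, w) = f (0, w) - logKernel a b (0, w) := by
    intro z w hz hw
    refine eq_of_hasDerivAt_eq_zero_on_ball (f := fun s => f (s, w) - logKernel a b (s, w))
      (fun s hs => ?_) (mem_ball_zero_iff.2 hz)
    rw [mem_ball_zero_iff] at hs
    have h := (hf (s, w) (mem_bidisk.2 ⟨by linarith, by linarith⟩)).differentiableAt
      |>.hasDerivAt_partialDerivFst |>.sub (hasDerivAt_logKernel_fst a b (z := s) (w := w)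
        (by linarith) (by linarith))
    rwa [apply_eq_apply_zero_div hu hpde hs hw,
      partialDerivFst_zero_eq_add_mul hsym hf hpde (norm_div_one_sub_mul_lt hs hw), sub_self] at h
  filter_upwards [prod_mem_nhds (ball_mem_nhds 0 (by norm_num : (0 : ℝ) < 1 / 2))
    (ball_mem_nhds 0 (by norm_num : (0 : ℝ) < 1 / 3))]
  rintro ⟨z, w⟩ ⟨hz, hw⟩
  rw [mem_ball_zero_iff] at hz hw
  have hfst : f (conj w, 0) = a * conj w := by
    have := hslice (conj w) 0 (by rw [norm_conj]; linarith) (by simp)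
    exact sub_eq_zero.1 (by simpa [logKernel, h00] using this)
  have hsnd : f (0, w) = conj a * w := by
    rw [hsym 0 w (by simp) (by linarith), map_zero, hfst, map_mul, conj_conj]
  have hK : logKernel a b (0, w) = conj a * w := by simp [logKernel]
  have := hslice z w hz hw
  rwa [hsnd, hK, sub_self, sub_eq_zero] at this

theorem exists_eqOn_logKernel (h00 : f (0, 0) = 0) :
    ∃ a b : ℂ, conj b = b ∧ Set.EqOn f (logKernel a b) bidisk :=
  ⟨_, _, conj_partialDerivSnd_partialDerivFst_zero hsym hf hpde,
    hf.eqOn_of_preconnected_of_eventuallyEq (analyticOnNhd_logKernel _ _)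
      ((convex_ball 0 1).prod (convex_ball 0 1)).isPreconnected (mem_bidisk.2 ⟨by simp, by simp⟩)
      (eventuallyEq_logKernel hsym hf hpde h00)⟩

end Hermitian

theorem eq_zero_of_re_logKernel_diag_nonneg {a b : ℂ}
    (hpos : ∀ ω : ℂ, ‖ω‖ < 1 → 0 ≤ (logKernel a b (ω, conj ω)).re) : a = 0 := by
  set φ : ℝ → ℝ := fun t => 2 * t * ‖a‖ ^ 2 - b.re * Real.log (1 - t ^ 2 * ‖a‖ ^ 2)
  have hφ : ∀ t : ℝ, |t| * ‖a‖ < 1 → 0 ≤ φ t := by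
    intro t ht
    have hω : ‖(t : ℂ) * conj a‖ = |t| * ‖a‖ := by simp
    have h := hpos _ (hω ▸ ht)
    rw [re_logKernel_diag a b (hω ▸ ht), hω, mul_left_comm, mul_conj, ← ofReal_mul,
      ofReal_re, normSq_eq_norm_sq, mul_pow, sq_abs] at h
    simpa [φ, mul_assoc] using h
  have hmin : IsLocalMin φ 0 := by
    have hnhds : ∀ᶠ t in 𝓝 (0 : ℝ), |t| * ‖a‖ < 1 :=
      Tendsto.eventually_lt_const (by simp)
        ((continuous_abs.mul continuous_const).tendsto' 0 (|0| * ‖a‖) rfl)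
    filter_upwards [hnhds] with t ht
    simpa [φ] using hφ t ht
  have hderiv : HasDerivAt φ (2 * ‖a‖ ^ 2) 0 := by
    have hlog := (((hasDerivAt_pow 2 (0 : ℝ)).mul_const (‖a‖ ^ 2)).const_sub 1).log (by simp)
    refine ((((hasDerivAt_id' (0 : ℝ)).const_mul 2).mul_const (‖a‖ ^ 2)).sub
      (hlog.const_mul b.re)).congr_deriv ?_
    simp
  simpa using hmin.hasDerivAt_eq_zero hderiv

theorem re_nonneg_of_re_logKernel_diag_nonneg {b : ℂ}
    (hpos : ∀ ω : ℂ, ‖ω‖ < 1 → 0 ≤ (logKernel 0 b (ω, conj ω)).re) : 0 ≤ b.re := by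
  have h := hpos (1 / 2) (by norm_num)
  rw [re_logKernel_diag 0 b (by norm_num), zero_mul, zero_re, mul_zero, zero_sub] at h
  have hlog : Real.log (1 - ‖(1 / 2 : ℂ)‖ ^ 2) < 0 := Real.log_neg (by norm_num) (by norm_num)
  nlinarith

theorem dirichlet_kernel_unique (F : ℂ → ℂ → ℂ)
    (hA : AnalyticOn ℂ (fun p : ℂ × ℂ => F p.1 p.2)
      (Metric.ball (0 : ℂ) 1 ×ˢ Metric.ball (0 : ℂ) 1))
    (h00 : F 0 0 = 0)
    (hSym : ∀ z w : ℂ, ‖z‖ < 1 → ‖w‖ < 1 →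
      F z w = conj (F (conj w) (conj z)))
    (hPDE : ∀ z w : ℂ, ‖z‖ < 1 → ‖w‖ < 1 →
      deriv (deriv (fun ζ : ℂ => F ζ w)) z
        = w ^ 2 * deriv (fun ξ : ℂ => deriv (fun ζ : ℂ => F ζ ξ) z) w)
    (hPos : ∀ (N : ℕ) (ω : Fin N → ℂ), (∀ i, ‖ω i‖ < 1) →
      ∀ c : Fin N → ℂ,
        (∑ i, ∑ j, conj (c i) * c j * F (ω i) (conj (ω j))).im = 0 ∧
          0 ≤ (∑ i, ∑ j, conj (c i) * c j * F (ω i) (conj (ω j))).re) :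
    ∃ c : ℝ, 0 ≤ c ∧ ∀ z w : ℂ, ‖z‖ < 1 → ‖w‖ < 1 →
      F z w = -(c : ℂ) * Complex.log (1 - z * w) := by
  have hf : AnalyticOnNhd ℂ (fun p : ℂ × ℂ => F p.1 p.2) bidisk :=
    (isOpen_ball.prod isOpen_ball).analyticOn_iff_analyticOnNhd.1 hA
  obtain ⟨a, b, hb, hK⟩ := exists_eqOn_logKernel hSym hf hPDE h00
  have hdiag (ω : ℂ) (hω : ‖ω‖ < 1) : 0 ≤ (logKernel a b (ω, conj ω)).re := by
    rw [← hK (mem_bidisk.2 ⟨hω, by rwa [norm_conj]⟩)]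
    simpa using (hPos 1 ![ω] (fun i => by fin_cases i; exact hω) ![1]).2
  obtain rfl := eq_zero_of_re_logKernel_diag_nonneg hdiag
  refine ⟨b.re, re_nonneg_of_re_logKernel_diag_nonneg hdiag, fun z w hz hw => ?_⟩
  rw [conj_eq_iff_re.1 hb]
  simpa [logKernel] using hK (mem_bidisk.2 ⟨hz, hw⟩)
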